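/- Let R_1, …, R_n be a REP instance in boundary B and let r be a fractional solution whose fractional density at every point of B is at most k. Define an escape assignment by choosing for each rectangle R_i a direction β_i maximizing r_{i,α} over the four directions α. Then the density of this assignment at every point of B is at most 4k (deterministic rounding is a 4-approximation). -/

import Mathlib

/-- One of the four axis-aligned escape directions. -/
inductive Dir | left | right | up | down
deriving DecidableEq

instance : Fintype Dir :=
  ⟨{Dir.left, Dir.right, Dir.up, Dir.down}, fun x => by cases x <;> simp⟩

/-- A closed axis-aligned rectangle `[xmin,xmax] × [ymin,ymax]`. -/
structure Rect where
  xmin : ℝ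
  xmax : ℝ
  ymin : ℝ
  ymax : ℝ

/-- The point set of a rectangle. -/
def Rect.pts (r : Rect) : Set (ℝ × ℝ) :=
  {p | r.xmin ≤ p.1 ∧ p.1 ≤ r.xmax ∧ r.ymin ≤ p.2 ∧ p.2 ≤ r.ymax}

/-- The rectangle is a genuine (nonempty) closed rectangle. -/
def Rect.proper (r : Rect) : Prop := r.xmin ≤ r.xmax ∧ r.ymin ≤ r.ymax

/-- The boundary box `B = [0,W] × [0,H]`. -/
def boundaryBox (W H : ℝ) : Set (ℝ × ℝ) := {p | 0 ≤ p.1 ∧ p.1 ≤ W ∧ 0 ≤ p.2 ∧ p.2 ≤ H}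

/-- The rectangle is contained in the boundary box `[0,W] × [0,H]`. -/
def Rect.inB (W H : ℝ) (r : Rect) : Prop :=
  0 ≤ r.xmin ∧ r.xmax ≤ W ∧ 0 ≤ r.ymin ∧ r.ymax ≤ H

/-- The escape path of a rectangle in a given direction, inside `[0,W] × [0,H]`. -/
def Rect.escape (W H : ℝ) (r : Rect) : Dir → Set (ℝ × ℝ)
  | Dir.right => {p | r.xmin ≤ p.1 ∧ p.1 ≤ W ∧ r.ymin ≤ p.2 ∧ p.2 ≤ r.ymax}
  | Dir.left  => {p | 0 ≤ p.1 ∧ p.1 ≤ r.xmax ∧ r.ymin ≤ p.2 ∧ p.2 ≤ r.ymax}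
  | Dir.up    => {p | r.xmin ≤ p.1 ∧ p.1 ≤ r.xmax ∧ r.ymin ≤ p.2 ∧ p.2 ≤ H}
  | Dir.down  => {p | r.xmin ≤ p.1 ∧ p.1 ≤ r.xmax ∧ 0 ≤ p.2 ∧ p.2 ≤ r.ymax}

/-- Density at point `p` of the escape assignment `σ` restricted to the subfamily `S`. -/
noncomputable def density {n : ℕ} (W H : ℝ) (R : Fin n → Rect) (S : Set (Fin n))
    (σ : Fin n → Dir) (p : ℝ × ℝ) : ℕ :=
  {i | i ∈ S ∧ p ∈ (R i).escape W H (σ i)}.ncard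

/-- The optimal (minimum over assignments of the maximum over points of `B`) density of
the subfamily `S`. -/
noncomputable def optDensity {n : ℕ} (W H : ℝ) (R : Fin n → Rect) (S : Set (Fin n)) : ℕ :=
  sInf {k | ∃ σ : Fin n → Dir, ∀ p ∈ boundaryBox W H, density W H R S σ p ≤ k}

/-- `R j` blocks `R i` in direction `α`. -/
def blocks {n : ℕ} (W H : ℝ) (R : Fin n → Rect) (α : Dir) (j i : Fin n) : Prop :=
  j ≠ i ∧ ¬ Disjoint (R j).pts ((R i).escape W H α)

/-- `R i` is free in direction `α` within the subfamily `S`: no other rectangle of `S`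
blocks it in direction `α`. -/
def free {n : ℕ} (W H : ℝ) (R : Fin n → Rect) (S : Set (Fin n)) (i : Fin n) (α : Dir) : Prop :=
  ∀ j ∈ S, j ≠ i → Disjoint ((R i).escape W H α) (R j).pts

/-- `peel W H R ℓ` is the set of indices remaining after removing peeling levels `1,…,ℓ`. -/
def peel {n : ℕ} (W H : ℝ) (R : Fin n → Rect) : ℕ → Set (Fin n)
  | 0 => Set.univ
  | ℓ + 1 => {i ∈ peel W H R ℓ | ¬ ∃ α, free W H R (peel W H R ℓ) i α}

/-- The peeling level of rectangle `R i` (the least `ℓ` at which it has been removed). -/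
noncomputable def levelOf {n : ℕ} (W H : ℝ) (R : Fin n → Rect) (i : Fin n) : ℕ :=
  sInf {ℓ | i ∉ peel W H R ℓ}

/-- The number `ρ` of nonempty peeling levels. -/
noncomputable def numLevels {n : ℕ} (W H : ℝ) (R : Fin n → Rect) : ℕ :=
  sInf {ℓ | peel W H R ℓ = ∅}

/-!
A direction maximizing `r i ·` carries weight at least `1/4`, since the four weights sum to at
least `1`. Hence every rectangle whose rounded escape path covers `p` contributes at least `1/4`
to the fractional density at `p`, and the number of such rectangles is at most `4k`.
-/

open Finset

lemma Dir.card_eq_four : Fintype.card Dir = 4 := rfl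

lemma one_le_card_mul_of_forall_le {ι : Type*} [Fintype ι] {r : ι → ℝ} {b : ι}
    (hsum : 1 ≤ ∑ α, r α) (hb : ∀ α, r α ≤ r b) : 1 ≤ Fintype.card ι * r b := by
  simpa [nsmul_eq_mul] using hsum.trans (sum_le_card_nsmul univ r (r b) fun α _ => hb α)

lemma indicator_one_le_card_mul_sum_indicator {X ι : Type*} [Fintype ι] (s : ι → Set X)
    {r : ι → ℝ} {b : ι} (hr : ∀ α, 0 ≤ r α) (hsum : 1 ≤ ∑ α, r α) (hb : ∀ α, r α ≤ r b)
    (p : X) :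
    (s b).indicator 1 p ≤ Fintype.card ι * ∑ α, (s α).indicator (fun _ => r α) p := by
  have hterm_nonneg : ∀ α, 0 ≤ (s α).indicator (fun _ => r α) p :=
    fun α => Set.indicator_nonneg (fun _ _ => hr α) p
  by_cases hp : p ∈ s b
  · calc (s b).indicator 1 p = 1 := Set.indicator_of_mem hp _
      _ ≤ Fintype.card ι * r b := one_le_card_mul_of_forall_le hsum hb
      _ = Fintype.card ι * (s b).indicator (fun _ => r b) p := by rw [Set.indicator_of_mem hp]
      _ ≤ Fintype.card ι * ∑ α, (s α).indicator (fun _ => r α) p := by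
        gcongr
        exact single_le_sum (fun α _ => hterm_nonneg α) (mem_univ b)
  · rw [Set.indicator_of_notMem hp]
    exact mul_nonneg (Nat.cast_nonneg _) (sum_nonneg fun α _ => hterm_nonneg α)

lemma density_univ_eq_sum_indicator {n : ℕ} (W H : ℝ) (R : Fin n → Rect) (σ : Fin n → Dir)
    (p : ℝ × ℝ) :
    (density W H R Set.univ σ p : ℝ) = ∑ i, ((R i).escape W H (σ i)).indicator 1 p := by
  classical
  simp only [density, Set.mem_univ, true_and, Set.ncard_eq_toFinset_card', Set.toFinset_ofPred,
    card_filter, Nat.cast_sum, Nat.cast_ite, Nat.cast_one, Nat.cast_zero, Set.indicator_apply,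
    Pi.one_apply]

theorem deterministic_rounding_four_approx_general {n : ℕ} (W H : ℝ) (R : Fin n → Rect)
    (r : Fin n → Dir → ℝ) (k : ℝ)
    (hr01 : ∀ i α, 0 ≤ r i α ∧ r i α ≤ 1)
    (hrsum : ∀ i, 1 ≤ ∑ α : Dir, r i α)
    (hfrac : ∀ p ∈ boundaryBox W H,
      ∑ i : Fin n, ∑ α : Dir, ((R i).escape W H α).indicator (fun _ => r i α) p ≤ k)
    (β : Fin n → Dir) (hβ : ∀ i α, r i α ≤ r i (β i)) :
    ∀ p ∈ boundaryBox W H, (density W H R Set.univ β p : ℝ) ≤ 4 * k := by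
  intro p hp
  rw [density_univ_eq_sum_indicator]
  calc ∑ i, ((R i).escape W H (β i)).indicator 1 p
      ≤ ∑ i, (Fintype.card Dir : ℝ) * ∑ α, ((R i).escape W H α).indicator (fun _ => r i α) p :=
        sum_le_sum fun i _ => indicator_one_le_card_mul_sum_indicator ((R i).escape W H)
          (fun α => (hr01 i α).1) (hrsum i) (hβ i) p
    _ = 4 * ∑ i, ∑ α, ((R i).escape W H α).indicator (fun _ => r i α) p := by
      rw [← mul_sum, Dir.card_eq_four, Nat.cast_ofNat]
    _ ≤ 4 * k := by linarith [hfrac p hp]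

/-- Deterministic rounding of a fractional solution is a 4-approximation:
if the fractional density of `r` is at most `k` everywhere in `B`, and `β i` is a direction
maximizing `r i ·`, then the density of the assignment `β` is at most `4k` everywhere. -/
theorem deterministic_rounding_four_approx {n : ℕ} (W H : ℝ) (R : Fin n → Rect)
    (hprop : ∀ i, (R i).proper) (hin : ∀ i, (R i).inB W H)
    (r : Fin n → Dir → ℝ) (k : ℝ)
    (hr01 : ∀ i α, 0 ≤ r i α ∧ r i α ≤ 1)
    (hrsum : ∀ i, 1 ≤ ∑ α : Dir, r i α)
    (hfrac : ∀ p ∈ boundaryBox W H,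
      ∑ i : Fin n, ∑ α : Dir, ((R i).escape W H α).indicator (fun _ => r i α) p ≤ k)
    (β : Fin n → Dir) (hβ : ∀ i α, r i α ≤ r i (β i)) :
    ∀ p ∈ boundaryBox W H, (density W H R Set.univ β p : ℝ) ≤ 4 * k :=
  deterministic_rounding_four_approx_general W H R r k hr01 hrsum hfrac β hβ
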